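/- The ReadRef rule preserves well-formedness: let σ = ⟨M,G,L,r::S⟩ be a well-formed state where r = ⟨c,p,q⟩ is a reference with c ∈ dom(M) and M(c)[p] = ⟨v,U⟩ a non-resource tagged value. Then the state ⟨M, G, L, ⟨v,U⟩::S⟩ is well-formed. -/

import Mathlib

namespace MoveSem

/-- Tags: either the non-resource tag `U` or a resource tag drawn from `RTag`. -/
inductive MTag (RTag : Type) : Type where
  | U : MTag RTag
  | res : RTag → MTag RTag

/-- Values: primitive values, or record values.  A record value is a non-empty finite
partial function from field names to tagged values, represented as an association
list (non-emptiness and distinctness of field names are imposed in the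
well-formedness predicates below). -/
inductive Val (Prim Fld RTag : Type) : Type where
  | prim : Prim → Val Prim Fld RTag
  | record : List (Fld × (Val Prim Fld RTag × MTag RTag)) → Val Prim Fld RTag

/-- Tagged values: a value paired with a tag. -/
abbrev TVal (Prim Fld RTag : Type) : Type := Val Prim Fld RTag × MTag RTag

variable {Loc Prim Var Fld RTag Ty : Type}

/-- Lookup in an association list (the partial-function reading of a record). -/
def lookupF {α : Type} [DecidableEq Fld] : List (Fld × α) → Fld → Option α
  | [], _ => none
  | (g, a) :: rest, f => if g = f then some a else lookupF rest f

/-- The subterm `tv[p]` of a tagged value located at path `p`. -/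
def subTV [DecidableEq Fld] : TVal Prim Fld RTag → List Fld → Option (TVal Prim Fld RTag)
  | tv, [] => some tv
  | (Val.record flds, _), f :: p =>
    match lookupF flds f with
    | some tv' => subTV tv' p
    | none => none
  | (Val.prim _, _), _ :: _ => none

/-- The replacement `tv[p := tv']` of the subterm at path `p` by `tv'`. -/
def setSubTV [DecidableEq Fld] : TVal Prim Fld RTag → List Fld → TVal Prim Fld RTag →
    Option (TVal Prim Fld RTag)
  | _, [], tv' => some tv'
  | (Val.record flds, t), f :: p, tv' =>
    match lookupF flds f with
    | some tvf =>
      match setSubTV tvf p tv' with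
      | some tvf' =>
        some (Val.record (flds.map fun ft => if ft.1 = f then (ft.1, tvf') else ft), t)
      | none => none
    | none => none
  | (Val.prim _, _), _ :: _, _ => none

/-- A tagged value is a *resource* when the type of its value is a resource type. -/
def IsRes (typeOf : Val Prim Fld RTag → Ty) (ResTy : Set Ty) (tv : TVal Prim Fld RTag) : Prop :=
  typeOf tv.1 ∈ ResTy

/-- Well-formed tagged values: the tag is a resource tag iff the type is a resource type,
and either the value is primitive, or it is a (non-empty, duplicate-free) record value all
of whose field values are well-formed and, in case the type is not a resource type, none of
whose field values is a resource. -/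
inductive WFTV (typeOf : Val Prim Fld RTag → Ty) (ResTy : Set Ty) :
    TVal Prim Fld RTag → Prop where
  | prim (p : Prim) (t : MTag RTag)
      (hiff : typeOf (Val.prim p) ∈ ResTy ↔ t ≠ MTag.U) :
      WFTV typeOf ResTy (Val.prim p, t)
  | record (flds : List (Fld × TVal Prim Fld RTag)) (t : MTag RTag)
      (hne : flds ≠ [])
      (hnodup : (flds.map Prod.fst).Nodup)
      (hwf : ∀ f tv, (f, tv) ∈ flds → WFTV typeOf ResTy tv)
      (hiff : typeOf (Val.record flds) ∈ ResTy ↔ t ≠ MTag.U)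
      (hnores : typeOf (Val.record flds) ∉ ResTy →
        ∀ f tv, (f, tv) ∈ flds → ¬ IsRes typeOf ResTy tv) :
      WFTV typeOf ResTy (Val.record flds, t)

/-- References: a location, a path, and a mutability qualifier (`true` = mut). -/
structure MRef (Loc Fld : Type) : Type where
  loc : Loc
  path : List Fld
  mutq : Bool

/-- Stack values: tagged values, references, or (for `Branch`) locations. -/
abbrev SVal (Loc Prim Fld RTag : Type) : Type :=
  TVal Prim Fld RTag ⊕ (MRef Loc Fld ⊕ Loc)

def SV.tv (tv : TVal Prim Fld RTag) : SVal Loc Prim Fld RTag := Sum.inl tv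
def SV.ref (r : MRef Loc Fld) : SVal Loc Prim Fld RTag := Sum.inr (Sum.inl r)
def SV.loc (c : Loc) : SVal Loc Prim Fld RTag := Sum.inr (Sum.inr c)

/-- States: a memory, a global store, a local map, and an operand stack. -/
structure MState (Loc Prim Var Fld RTag Ty : Type) : Type where
  M : Loc → Option (TVal Prim Fld RTag)
  G : Prim × Ty → Option Loc
  L : Var → Option (Loc ⊕ MRef Loc Fld)
  S : List (SVal Loc Prim Fld RTag)

/-- Update (or delete, with `b = none`) a binding of a partial map. -/
def upd {α β : Type} [DecidableEq α] (f : α → Option β) (a : α) (b : Option β) :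
    α → Option β :=
  fun x => if x = a then b else f x

/-- Globally consistent states. -/
structure GloballyConsistent (typeOf : Val Prim Fld RTag → Ty) (ResTy : Set Ty)
    (σ : MState Loc Prim Var Fld RTag Ty) : Prop where
  wf_mem : ∀ c tv, σ.M c = some tv → WFTV typeOf ResTy tv
  wf_stack : ∀ tv, SV.tv tv ∈ σ.S → WFTV typeOf ResTy tv
  dom_eq : ∀ c, (∃ tv, σ.M c = some tv) ↔
    ((∃ g, σ.G g = some c) ∨ (∃ x, σ.L x = some (Sum.inl c)))
  glob_ty : ∀ a s c, σ.G (a, s) = some c → ∃ v t, σ.M c = some (v, t) ∧ typeOf v = s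

/-- Tag-consistent states: each resource tag occurs at most once among subterms of
memory values and stack entries. -/
structure TagConsistent [DecidableEq Fld] (σ : MState Loc Prim Var Fld RTag Ty) : Prop where
  mem_mem : ∀ c₁ c₂ tv₁ tv₂ p₁ p₂ v₁ v₂ t, σ.M c₁ = some tv₁ → σ.M c₂ = some tv₂ →
    subTV tv₁ p₁ = some (v₁, MTag.res t) → subTV tv₂ p₂ = some (v₂, MTag.res t) →
    c₁ = c₂ ∧ p₁ = p₂
  stack_stack : ∀ (i₁ i₂ : ℕ) tv₁ tv₂ p₁ p₂ v₁ v₂ t,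
    σ.S[i₁]? = some (SV.tv tv₁) → σ.S[i₂]? = some (SV.tv tv₂) →
    subTV tv₁ p₁ = some (v₁, MTag.res t) → subTV tv₂ p₂ = some (v₂, MTag.res t) →
    i₁ = i₂ ∧ p₁ = p₂
  mem_stack : ∀ c tv (i : ℕ) tv' p₁ p₂ v₁ v₂ t, σ.M c = some tv → σ.S[i]? = some (SV.tv tv') →
    subTV tv p₁ = some (v₁, MTag.res t) → subTV tv' p₂ = some (v₂, MTag.res t) → False

/-- Non-aliasing states. -/
structure NonAliasing (σ : MState Loc Prim Var Fld RTag Ty) : Prop where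
  locals : ∀ x₁ x₂ c, x₁ ≠ x₂ → σ.L x₁ = some (Sum.inl c) → σ.L x₂ = some (Sum.inl c) → False
  globals : ∀ g₁ g₂ c, g₁ ≠ g₂ → σ.G g₁ = some c → σ.G g₂ = some c → False
  glob_loc : ∀ g x c, σ.G g = some c → σ.L x = some (Sum.inl c) → False

/-- Well-formed states. -/
structure WFState [DecidableEq Fld] (typeOf : Val Prim Fld RTag → Ty) (ResTy : Set Ty)
    (σ : MState Loc Prim Var Fld RTag Ty) : Prop where
  gc : GloballyConsistent typeOf ResTy σ
  tc : TagConsistent σ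
  na : NonAliasing σ

/-- The resource tags of a state: tags occurring on some subterm of a value in the
image of the memory or of a tagged value on the stack. -/
def resources [DecidableEq Fld] (σ : MState Loc Prim Var Fld RTag Ty) : Set RTag :=
  { t | (∃ c tv p v, σ.M c = some tv ∧ subTV tv p = some (v, MTag.res t)) ∨
        (∃ tv, SV.tv tv ∈ σ.S ∧ ∃ p v, subTV tv p = some (v, MTag.res t)) }

set_option linter.unusedSectionVars false

section Aux
variable {Loc Prim Var Fld RTag Ty : Type} [DecidableEq Fld]

lemma lookupF_mem {α : Type} [DecidableEq Fld] {l : List (Fld × α)} {f : Fld} {a : α}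
    (h : @lookupF Fld α _ l f = some a) : (f, a) ∈ l := by
  induction l with
  | nil => simp [lookupF] at h
  | cons hd tl ih =>
    simp only [lookupF] at h
    split at h
    · rename_i hg
      cases h; subst hg
      exact List.mem_cons_self
    · exact List.mem_cons_of_mem _ (ih h)

@[simp] lemma subTV_nil {tv : TVal Prim Fld RTag} : subTV (Fld := Fld) tv [] = some tv := by
  obtain ⟨v, t⟩ := tv; cases v <;> rfl

lemma wf_subTV {typeOf : Val Prim Fld RTag → Ty} {ResTy : Set Ty}
    {tv tv' : TVal Prim Fld RTag} {p : List Fld}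
    (hwf : WFTV typeOf ResTy tv) (h : subTV tv p = some tv') :
    WFTV typeOf ResTy tv' := by
  induction p generalizing tv with
  | nil => rw [subTV_nil] at h; cases h; exact hwf
  | cons f p ih =>
    cases hwf with
    | prim q t hiff => simp [subTV] at h
    | record flds t hne hnodup hwfF hiff hnores =>
      simp only [subTV] at h
      cases hl : lookupF flds f with
      | none => rw [hl] at h; exact absurd h (by simp)
      | some tvf =>
        rw [hl] at h
        exact ih (hwfF f tvf (lookupF_mem hl)) h

lemma tag_U_of_nonres {typeOf : Val Prim Fld RTag → Ty} {ResTy : Set Ty}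
    {tv : TVal Prim Fld RTag}
    (hwf : WFTV typeOf ResTy tv) (hnr : typeOf tv.1 ∉ ResTy) : tv.2 = MTag.U := by
  cases hwf with
  | prim q t hiff => by_contra h; exact hnr (hiff.mpr h)
  | record flds t hne hnodup hwfF hiff hnores => by_contra h; exact hnr (hiff.mpr h)

lemma no_res_in_U {typeOf : Val Prim Fld RTag → Ty} {ResTy : Set Ty}
    {tv : TVal Prim Fld RTag} {p : List Fld} {w : Val Prim Fld RTag} {t : RTag}
    (hwf : WFTV typeOf ResTy tv) (hU : tv.2 = MTag.U)
    (h : subTV tv p = some (w, MTag.res t)) : False := by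
  induction p generalizing tv with
  | nil =>
    rw [subTV_nil] at h
    cases h
    simp at hU
  | cons f p ih =>
    cases hwf with
    | prim q t' hiff => simp [subTV] at h
    | record flds t' hne hnodup hwfF hiff hnores =>
      simp only at hU; subst hU
      have hnr : typeOf (Val.record flds) ∉ ResTy := by
        intro hr; exact (hiff.mp hr) rfl
      simp only [subTV] at h
      cases hl : lookupF flds f with
      | none => rw [hl] at h; exact absurd h (by simp)
      | some tvf =>
        rw [hl] at h
        have hwff := hwfF f tvf (lookupF_mem hl)
        have hnrf := hnores hnr f tvf (lookupF_mem hl)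
        exact ih hwff (tag_U_of_nonres hwff hnrf) h

lemma subTV_append {tv tv' : TVal Prim Fld RTag} {p p' : List Fld}
    (h : subTV tv p = some tv') : subTV tv (p ++ p') = subTV tv' p' := by
  induction p generalizing tv with
  | nil => rw [subTV_nil] at h; cases h; rfl
  | cons f p ih =>
    obtain ⟨v, t⟩ := tv
    cases v with
    | prim q => simp [subTV] at h
    | record flds =>
      simp only [subTV, List.cons_append] at h ⊢
      cases hl : lookupF flds f with
      | none => rw [hl] at h; exact absurd h (by simp)
      | some tvf => rw [hl] at h; exact ih h

end Aux

/-- The `ReadRef` rule preserves well-formedness. -/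
theorem readref_preserves_wf {Loc Prim Var Fld RTag Ty : Type}
    [DecidableEq Loc] [DecidableEq Prim] [DecidableEq Var] [DecidableEq Fld] [DecidableEq Ty]
    [Countable Loc] [Countable Prim] [Countable Var] [Countable RTag] [Finite Fld]
    (typeOf : Val Prim Fld RTag → Ty) (ResTy : Set Ty)
    (M : Loc → Option (TVal Prim Fld RTag)) (G : Prim × Ty → Option Loc)
    (L : Var → Option (Loc ⊕ MRef Loc Fld)) (S : List (SVal Loc Prim Fld RTag))
    (c : Loc) (p : List Fld) (q : Bool) (tv : TVal Prim Fld RTag) (v : Val Prim Fld RTag)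
    (hwf : WFState typeOf ResTy (MState.mk M G L (SV.ref ⟨c, p, q⟩ :: S)))
    (hc : M c = some tv) (hsub : subTV tv p = some (v, MTag.U)) :
    WFState typeOf ResTy (MState.mk M G L (SV.tv (v, MTag.U) :: S)) := by
  obtain ⟨gc, tc, na⟩ := hwf
  have hwfm := gc.wf_mem c tv hc
  have hwfv : WFTV typeOf ResTy (v, MTag.U) := wf_subTV hwfm hsub
  -- the new stack head contains no resource tags
  have sub0 : ∀ (p' : List Fld) (w : Val Prim Fld RTag) (t : RTag),
      subTV (v, MTag.U) p' = some (w, MTag.res t) → False := by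
    intro p' w t h
    exact no_res_in_U hwfv rfl h
  refine ⟨?_, ?_, ?_⟩
  · refine ⟨gc.wf_mem, ?_, gc.dom_eq, gc.glob_ty⟩
    intro tv' htv'
    rcases List.mem_cons.mp htv' with h | h
    · have : tv' = (v, MTag.U) := by
        simpa [SV.tv] using h
      rw [this]; exact hwfv
    · exact gc.wf_stack tv' (List.mem_cons_of_mem _ h)
  · refine ⟨tc.mem_mem, ?_, ?_⟩
    · intro i₁ i₂ tv₁ tv₂ p₁ p₂ v₁ v₂ t h₁ h₂ hs₁ hs₂
      match i₁, i₂ with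
      | 0, _ =>
        simp only [List.getElem?_cons_zero, Option.some.injEq] at h₁
        have : tv₁ = (v, MTag.U) := by simpa [SV.tv] using h₁.symm
        subst this
        exact absurd hs₁ (fun h => sub0 _ _ _ h)
      | _ + 1, 0 =>
        simp only [List.getElem?_cons_zero, Option.some.injEq] at h₂
        have : tv₂ = (v, MTag.U) := by simpa [SV.tv] using h₂.symm
        subst this
        exact absurd hs₂ (fun h => sub0 _ _ _ h)
      | n₁ + 1, n₂ + 1 =>
        simp only [List.getElem?_cons_succ] at h₁ h₂
        have := tc.stack_stack (n₁ + 1) (n₂ + 1) tv₁ tv₂ p₁ p₂ v₁ v₂ t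
          (by simpa using h₁) (by simpa using h₂) hs₁ hs₂
        exact ⟨this.1, this.2⟩
    · intro c' tv'' i tv' p₁ p₂ v₁ v₂ t hm hst hs₁ hs₂
      match i with
      | 0 =>
        simp only [List.getElem?_cons_zero, Option.some.injEq] at hst
        have : tv' = (v, MTag.U) := by simpa [SV.tv] using hst.symm
        subst this
        exact sub0 _ _ _ hs₂
      | n + 1 =>
        simp only [List.getElem?_cons_succ] at hst
        exact tc.mem_stack c' tv'' (n + 1) tv' p₁ p₂ v₁ v₂ t hm (by simpa using hst) hs₁ hs₂
  · exact ⟨na.locals, na.globals, na.glob_loc⟩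

end MoveSem
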